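/- Let ϕ(t) = -log t + c·(log t · arctan(log t) - (1/2)·log(1 + (log t)²)) with 0 < c < 1/2. Then for all t ∈ (1/4, 4), ϕ''(t) + ϕ'(t)/t > 0. -/

import Mathlib

/-!
Writing `ϕ = g ∘ log`, the operator `ϕ'' + ϕ'/t` (the radial part of the planar Laplacian)
becomes `g''(log t) / t²`. Here `g s = -s + c (s arctan s - ½ log (1 + s²))`, so `g' = -1 + c arctan`
and `g'' s = c / (1 + s²) > 0`.
-/

open Real

theorem hasDerivAt_mul_arctan_sub_log (s : ℝ) :
    HasDerivAt (fun s => s * arctan s - 1 / 2 * log (1 + s ^ 2)) (arctan s) s := by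
  have hprod : HasDerivAt (fun s => s * arctan s) (1 * arctan s + s * (1 / (1 + s ^ 2))) s :=
    (hasDerivAt_id' s).mul (hasDerivAt_arctan s)
  have hlog : HasDerivAt (fun s => log (1 + s ^ 2)) (2 * s / (1 + s ^ 2)) s := by
    simpa using ((hasDerivAt_pow 2 s).const_add 1).log (by positivity)
  refine (hprod.sub (hlog.const_mul (1 / 2))).congr_deriv ?_
  field_simp
  ring

section CompLog

variable {g g' : ℝ → ℝ}

theorem deriv_comp_log (hg : ∀ s, HasDerivAt g (g' s) s) {x : ℝ} (hx : 0 < x) :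
    deriv (g ∘ log) x = g' (log x) / x := by
  rw [((hg (log x)).comp x (hasDerivAt_log hx.ne')).deriv, div_eq_mul_inv]

theorem deriv_deriv_comp_log_add_div {g'' : ℝ → ℝ} (hg : ∀ s, HasDerivAt g (g' s) s)
    {t : ℝ} (ht : 0 < t) (hg' : HasDerivAt g' (g'' (log t)) (log t)) :
    deriv (deriv (g ∘ log)) t + deriv (g ∘ log) t / t = g'' (log t) / t ^ 2 := by
  have hderiv : deriv (g ∘ log) =ᶠ[nhds t] fun x => g' (log x) / x := by
    filter_upwards [eventually_gt_nhds ht] with x hx using deriv_comp_log hg hx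
  have hderiv' : HasDerivAt (fun x => g' (log x) / x)
      ((g'' (log t) * t⁻¹ * t - g' (log t) * 1) / t ^ 2) t :=
    (hg'.comp t (hasDerivAt_log ht.ne')).div (hasDerivAt_id t) ht.ne'
  rw [hderiv.deriv_eq, hderiv'.deriv, deriv_comp_log hg ht]
  field_simp
  ring

end CompLog

theorem pseudoconvexity_positivity_general (c : ℝ) (hc0 : 0 < c)
    (ϕ : ℝ → ℝ)
    (hϕ : ∀ t : ℝ, ϕ t = -Real.log t
        + c * (Real.log t * Real.arctan (Real.log t)
            - (1 / 2) * Real.log (1 + (Real.log t) ^ 2))) :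
    ∀ t : ℝ, 1 / 4 < t → t < 4 →
      deriv (deriv ϕ) t + deriv ϕ t / t > 0 := by
  intro t ht _
  set g : ℝ → ℝ := fun s => -s + c * (s * arctan s - 1 / 2 * log (1 + s ^ 2))
  have hϕg : ϕ = g ∘ log := funext hϕ
  have hg : ∀ s, HasDerivAt g (-1 + c * arctan s) s := fun s =>
    (hasDerivAt_neg s).add ((hasDerivAt_mul_arctan_sub_log s).const_mul c)
  have hg' : HasDerivAt (fun s => -1 + c * arctan s) (c * (1 / (1 + log t ^ 2))) (log t) :=
    ((hasDerivAt_arctan (log t)).const_mul c).const_add (-1)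
  rw [hϕg, deriv_deriv_comp_log_add_div (g'' := fun s => c * (1 / (1 + s ^ 2))) hg
    (by linarith) hg']
  positivity

theorem pseudoconvexity_positivity (c : ℝ) (hc0 : 0 < c) (hc : c < 1 / 2)
    (ϕ : ℝ → ℝ)
    (hϕ : ∀ t : ℝ, ϕ t = -Real.log t
        + c * (Real.log t * Real.arctan (Real.log t)
            - (1 / 2) * Real.log (1 + (Real.log t) ^ 2))) :
    ∀ t : ℝ, 1 / 4 < t → t < 4 →
      deriv (deriv ϕ) t + deriv ϕ t / t > 0 :=
  pseudoconvexity_positivity_general c hc0 ϕ hϕ
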